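/- Under ARB-Loss, the rewritten gradient with respect to w_i equals −n_i h̃_{(i)} + ∑_{k ≠ i} n_i h̃_{(k)}, i.e., the attraction coefficient n_i equals every repulsion coefficient, where h̃_{(k)} = (1/n_k) ∑_{j ∈ π(k)} q̃_{j,i}^{(k)} h_j with q̃_{j,i}^{(k)} = 1 − p̃_{j,i}^{(i)} for j ∈ π(i) (k = i) and q̃_{j,i}^{(k)} = p̃_{j,i}^{(k)} for j ∈ π(k), k ≠ i. -/

import Mathlib

open Finset
open scoped RealInnerProductSpace

theorem stmt_14_general (d c n : ℕ)
    (h : Fin n → EuclideanSpace ℝ (Fin d)) (y : Fin n → Fin c)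
    (hcard : ∀ k : Fin c, (univ.filter (fun j => y j = k)).Nonempty)
    (nC : Fin c → ℝ) (hn : ∀ k, nC k = ((univ.filter (fun j => y j = k)).card : ℝ))
    (i : Fin c)
    (ptil : Fin n → Fin c → Fin c → ℝ)
    (qtil : Fin n → ℝ)
    (hqtil : ∀ j, qtil j = if y j = i then 1 - ptil j i i else ptil j i (y j)) :
    ((-∑ j ∈ univ.filter (fun j => y j = i), (1 - ptil j i i) • h j) +
        ∑ k ∈ univ.filter (fun k => k ≠ i),
          ∑ j ∈ univ.filter (fun j => y j = k), ((nC i / nC k) * ptil j i k) • h j) =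
      (-(nC i • ((nC i)⁻¹ • ∑ j ∈ univ.filter (fun j => y j = i), qtil j • h j))) +
        ∑ k ∈ univ.filter (fun k => k ≠ i),
          nC i • ((nC k)⁻¹ • ∑ j ∈ univ.filter (fun j => y j = k), qtil j • h j) := by
  have hni : nC i ≠ 0 := by
    rw [hn i]
    exact_mod_cast (hcard i).card_pos.ne'
  congr 1
  · rw [smul_inv_smul₀ hni]
    congr 1
    refine sum_congr rfl fun j hj => ?_
    rw [hqtil j, if_pos (mem_filter.1 hj).2]
  · refine sum_congr rfl fun k hk => ?_
    rw [smul_sum, smul_sum]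
    refine sum_congr rfl fun j hj => ?_
    rw [hqtil j, (mem_filter.1 hj).2, if_neg (mem_filter.1 hk).2, smul_smul, smul_smul,
      div_eq_mul_inv, mul_assoc]

/-- Under ARB-Loss, the gradient with respect to `w i` rewrites as
`−n_i h̃_{(i)} + ∑_{k≠i} n_i h̃_{(k)}`: the attraction coefficient equals every
repulsion coefficient, where `h̃_{(k)} = (1/n_k) ∑_{j∈π(k)} q̃_{j,i} h_j` with
`q̃_{j,i} = 1 − p̃^{(i)}_{j,i}` on `π(i)` and `q̃_{j,i} = p̃^{(k)}_{j,i}` on `π(k)`, `k ≠ i`. -/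
theorem stmt_14 (d c n : ℕ)
    (h : Fin n → EuclideanSpace ℝ (Fin d)) (y : Fin n → Fin c)
    (w : Fin c → EuclideanSpace ℝ (Fin d))
    (hcard : ∀ k : Fin c, (univ.filter (fun j => y j = k)).Nonempty)
    (nC : Fin c → ℝ) (hn : ∀ k, nC k = ((univ.filter (fun j => y j = k)).card : ℝ))
    (i : Fin c)
    (ptil : Fin n → Fin c → Fin c → ℝ)
    (hptil : ∀ j i' α, ptil j i' α =
      Real.exp ⟪w i', h j⟫ / ∑ k, (nC k / nC α) * Real.exp ⟪w k, h j⟫)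
    (qtil : Fin n → ℝ)
    (hqtil : ∀ j, qtil j = if y j = i then 1 - ptil j i i else ptil j i (y j)) :
    ((-∑ j ∈ univ.filter (fun j => y j = i), (1 - ptil j i i) • h j) +
        ∑ k ∈ univ.filter (fun k => k ≠ i),
          ∑ j ∈ univ.filter (fun j => y j = k), ((nC i / nC k) * ptil j i k) • h j) =
      (-(nC i • ((nC i)⁻¹ • ∑ j ∈ univ.filter (fun j => y j = i), qtil j • h j))) +
        ∑ k ∈ univ.filter (fun k => k ≠ i),
          nC i • ((nC k)⁻¹ • ∑ j ∈ univ.filter (fun j => y j = k), qtil j • h j) :=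
  stmt_14_general d c n h y hcard nC hn i ptil qtil hqtil
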